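/- Non-existence of a type-only encoding of simple variant subtyping as presence polymorphism: there is no global, compositional, type-only translation from λ_⟨⟩^{≤} (variants with width subtyping) to λ_⟨⟩^{θ} (variants with presence polymorphism) preserving typing. Concretely, under Δ = α₀, Γ = y:α₀, the terms (ℓ₁ y)^{⟨ℓ₁:α₀; ℓ₂:α₀⟩} and (ℓ₁ y)^{⟨ℓ₁:α₀⟩} ▷ ⟨ℓ₁:α₀; ℓ₂:α₀⟩ have the same source type, but since ℓ₂ is arbitrary and presence polymorphism cannot add new labels to a row, their type-only translations cannot have equal target types. -/

import Mathlib

namespace Stmt11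

abbrev Label := ℕ

/-- Types of λ_⟨⟩^{≤}: base type variables, functions, variant types over rows. -/
inductive Ty : Type where
  | tvar : ℕ → Ty
  | arrow : Ty → Ty → Ty
  | variant : List (Label × Ty) → Ty

/-- Simple (width) variant subtyping on rows:
dom(R) ⊆ dom(R') and R'|_{dom R} = R. -/
def VSub (R R' : List (Label × Ty)) : Prop :=
  ∀ ℓ A, List.lookup ℓ R = some A → List.lookup ℓ R' = some A

/-- Subtyping on types of λ_⟨⟩^{≤}: only the shallow variant rule. -/
inductive Sub : Ty → Ty → Prop where
  | variant {R R'} : VSub R R' → Sub (.variant R) (.variant R')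

/-- Terms, de Bruijn indices.  `inj ℓ M A` is the annotated injection (ℓ M)^A and
`upcast M A B` is the annotated upcast M^A ▷ B. -/
inductive Tm : Type where
  | var : ℕ → Tm
  | lam : Ty → Tm → Tm
  | app : Tm → Tm → Tm
  | inj : Label → Tm → Ty → Tm
  | case : Tm → List (Label × Tm) → Tm
  | upcast : Tm → Ty → Ty → Tm

mutual
/-- Shift de Bruijn indices ≥ c up by one. -/
def shiftTm (c : ℕ) : Tm → Tm
  | .var n => if n < c then .var n else .var (n + 1)
  | .lam A M => .lam A (shiftTm (c + 1) M)
  | .app M N => .app (shiftTm c M) (shiftTm c N)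
  | .inj ℓ M A => .inj ℓ (shiftTm c M) A
  | .case M Bs => .case (shiftTm c M) (shiftBs (c + 1) Bs)
  | .upcast M A B => .upcast (shiftTm c M) A B
def shiftBs (c : ℕ) : List (Label × Tm) → List (Label × Tm)
  | [] => []
  | (ℓ, M) :: Bs => (ℓ, shiftTm c M) :: shiftBs c Bs
end

mutual
/-- Capture-avoiding substitution of N for de Bruijn index k. -/
def substTm (k : ℕ) (N : Tm) : Tm → Tm
  | .var n => if n = k then N else if n < k then .var n else .var (n - 1)
  | .lam A M => .lam A (substTm (k + 1) (shiftTm 0 N) M)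
  | .app M₁ M₂ => .app (substTm k N M₁) (substTm k N M₂)
  | .inj ℓ M A => .inj ℓ (substTm k N M) A
  | .case M Bs => .case (substTm k N M) (substBs (k + 1) (shiftTm 0 N) Bs)
  | .upcast M A B => .upcast (substTm k N M) A B
def substBs (k : ℕ) (N : Tm) : List (Label × Tm) → List (Label × Tm)
  | [] => []
  | (ℓ, M) :: Bs => (ℓ, substTm k N M) :: substBs k N Bs
end

/-- Typing of λ_⟨⟩^{≤} (contexts are de Bruijn lists of types). -/
inductive HasTy : List Ty → Tm → Ty → Prop where
  | var {Γ n A} : Γ[n]? = some A → HasTy Γ (.var n) A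
  | lam {Γ A B M} : HasTy (A :: Γ) M B → HasTy Γ (.lam A M) (.arrow A B)
  | app {Γ A B M N} : HasTy Γ M (.arrow A B) → HasTy Γ N A → HasTy Γ (.app M N) B
  | inj {Γ ℓ R A M} : List.lookup ℓ R = some A → HasTy Γ M A →
      HasTy Γ (.inj ℓ M (.variant R)) (.variant R)
  | case {Γ R M Bs C} : HasTy Γ M (.variant R) →
      (∀ ℓ A, List.lookup ℓ R = some A → (List.lookup ℓ Bs).isSome) →
      (∀ ℓ A N, List.lookup ℓ R = some A → List.lookup ℓ Bs = some N →
        HasTy (A :: Γ) N C) →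
      HasTy Γ (.case M Bs) C
  | upcast {Γ R R' M} : HasTy Γ M (.variant R) → VSub R R' →
      HasTy Γ (.upcast M (.variant R) (.variant R')) (.variant R')


/-! ### Typing derivations of λ_⟨⟩^{≤} as data. -/

mutual
inductive Deriv : List Ty → Tm → Ty → Type where
  | var {Γ n A} : Γ[n]? = some A → Deriv Γ (.var n) A
  | lam {Γ A B M} : Deriv (A :: Γ) M B → Deriv Γ (.lam A M) (.arrow A B)
  | app {Γ A B M N} : Deriv Γ M (.arrow A B) → Deriv Γ N A → Deriv Γ (.app M N) B
  | inj {Γ ℓ R A M} : List.lookup ℓ R = some A → Deriv Γ M A →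
      Deriv Γ (.inj ℓ M (.variant R)) (.variant R)
  | case {Γ R M Bs C} : Deriv Γ M (.variant R) → DerivBs Γ R Bs C →
      Deriv Γ (.case M Bs) C
  | upcast {Γ R R' M} : Deriv Γ M (.variant R) → VSub R R' →
      Deriv Γ (.upcast M (.variant R) (.variant R')) (.variant R')
inductive DerivBs : List Ty → List (Label × Ty) → List (Label × Tm) → Ty → Type where
  | nil {Γ C} : DerivBs Γ [] [] C
  | cons {Γ ℓ A N R Bs C} : Deriv (A :: Γ) N C → DerivBs Γ R Bs C →
      DerivBs Γ ((ℓ, A) :: R) ((ℓ, N) :: Bs) C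
end

/-! ### The target calculus λ_⟨⟩^{θ}: variants with presence polymorphism. -/

/-- Presence annotations: absent, present, or a presence variable (de Bruijn). -/
inductive Pre : Type where
  | abs : Pre
  | pres : Pre
  | pvar : ℕ → Pre

/-- Target types: presence-annotated variant rows and presence quantification. -/
inductive PTy : Type where
  | tvar : ℕ → PTy
  | arrow : PTy → PTy → PTy
  | variant : List (Label × Pre × PTy) → PTy
  | pall : PTy → PTy

def shiftPre (c : ℕ) : Pre → Pre
  | .pvar n => if n < c then .pvar n else .pvar (n + 1)
  | p => p

mutual
def shiftPTy (c : ℕ) : PTy → PTy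
  | .tvar n => .tvar n
  | .arrow A B => .arrow (shiftPTy c A) (shiftPTy c B)
  | .variant es => .variant (shiftPEs c es)
  | .pall A => .pall (shiftPTy (c + 1) A)
def shiftPEs (c : ℕ) : List (Label × Pre × PTy) → List (Label × Pre × PTy)
  | [] => []
  | (ℓ, P, A) :: es => (ℓ, shiftPre c P, shiftPTy c A) :: shiftPEs c es
end

def substPre (k : ℕ) (P : Pre) : Pre → Pre
  | .pvar n => if n = k then P else if n < k then .pvar n else .pvar (n - 1)
  | p => p

mutual
def substPTy (k : ℕ) (P : Pre) : PTy → PTy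
  | .tvar n => .tvar n
  | .arrow A B => .arrow (substPTy k P A) (substPTy k P B)
  | .variant es => .variant (substPEs k P es)
  | .pall A => .pall (substPTy (k + 1) (shiftPre 0 P) A)
def substPEs (k : ℕ) (P : Pre) : List (Label × Pre × PTy) → List (Label × Pre × PTy)
  | [] => []
  | (ℓ, Q, A) :: es => (ℓ, substPre k P Q, substPTy k P A) :: substPEs k P es
end

/-- Type equivalence: rows compared ignoring label order and absent labels. -/
inductive PTyEquiv : PTy → PTy → Prop where
  | refl (A) : PTyEquiv A A
  | symm {A B} : PTyEquiv A B → PTyEquiv B A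
  | trans {A B C} : PTyEquiv A B → PTyEquiv B C → PTyEquiv A C
  | arrow {A A' B B'} : PTyEquiv A A' → PTyEquiv B B' →
      PTyEquiv (.arrow A B) (.arrow A' B')
  | pall {A A'} : PTyEquiv A A' → PTyEquiv (.pall A) (.pall A')
  | variantCongr {es es'} :
      es.map (fun q => (q.1, q.2.1)) = es'.map (fun q => (q.1, q.2.1)) →
      (∀ (i : ℕ) (p q : Label × Pre × PTy), es[i]? = some p → es'[i]? = some q →
        PTyEquiv p.2.2 q.2.2) →
      PTyEquiv (.variant es) (.variant es')
  | variantPerm {es es'} : List.Perm es es' →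
      PTyEquiv (.variant es) (.variant es')
  | variantAbsent {es₁ es₂ ℓ A} :
      PTyEquiv (.variant (es₁ ++ (ℓ, Pre.abs, A) :: es₂)) (.variant (es₁ ++ es₂))

/-- Target terms: λ_⟨⟩ plus presence abstraction and application. -/
inductive PTm : Type where
  | var : ℕ → PTm
  | lam : PTy → PTm → PTm
  | app : PTm → PTm → PTm
  | inj : Label → PTm → PTy → PTm
  | case : PTm → List (Label × PTm) → PTm
  | plam : PTm → PTm
  | papp : PTm → Pre → PTm

/-- Typing of λ_⟨⟩^{θ}. -/
inductive PHasTy : List PTy → PTm → PTy → Prop where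
  | var {Γ n A} : Γ[n]? = some A → PHasTy Γ (.var n) A
  | lam {Γ A B M} : PHasTy (A :: Γ) M B → PHasTy Γ (.lam A M) (.arrow A B)
  | app {Γ A B M N} : PHasTy Γ M (.arrow A B) → PHasTy Γ N A → PHasTy Γ (.app M N) B
  | inj {Γ ℓ es A M} : List.lookup ℓ es = some (Pre.pres, A) → PHasTy Γ M A →
      PHasTy Γ (.inj ℓ M (.variant es)) (.variant es)
  | case {Γ es M Bs C} : PHasTy Γ M (.variant es) →
      (∀ ℓ P A, List.lookup ℓ es = some (P, A) → (List.lookup ℓ Bs).isSome) →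
      (∀ ℓ P A N, List.lookup ℓ es = some (P, A) → List.lookup ℓ Bs = some N →
        PHasTy (A :: Γ) N C) →
      PHasTy Γ (.case M Bs) C
  | plam {Γ M A} : PHasTy (Γ.map (shiftPTy 0)) M A → PHasTy Γ (.plam M) (.pall A)
  | papp {Γ M A P} : PHasTy Γ M (.pall A) → PHasTy Γ (.papp M P) (substPTy 0 P A)
  | conv {Γ M A A'} : PHasTy Γ M A → PTyEquiv A A' → PHasTy Γ M A'

/-! ### Untyped terms and erasure. -/

/-- Untyped λ_⟨⟩ terms. -/
inductive UTm : Type where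
  | var : ℕ → UTm
  | lam : UTm → UTm
  | app : UTm → UTm → UTm
  | inj : Label → UTm → UTm
  | case : UTm → List (Label × UTm) → UTm

mutual
/-- Erasure of source terms: drop upcasts and type annotations. -/
def eraseS : Tm → UTm
  | .var n => .var n
  | .lam _ M => .lam (eraseS M)
  | .app M N => .app (eraseS M) (eraseS N)
  | .inj ℓ M _ => .inj ℓ (eraseS M)
  | .case M Bs => .case (eraseS M) (eraseSBs Bs)
  | .upcast M _ _ => eraseS M
def eraseSBs : List (Label × Tm) → List (Label × UTm)
  | [] => []
  | (ℓ, M) :: Bs => (ℓ, eraseS M) :: eraseSBs Bs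
end

mutual
/-- Erasure of target terms: drop presence abstractions, presence applications
and type annotations. -/
def eraseP : PTm → UTm
  | .var n => .var n
  | .lam _ M => .lam (eraseP M)
  | .app M N => .app (eraseP M) (eraseP N)
  | .inj ℓ M _ => .inj ℓ (eraseP M)
  | .case M Bs => .case (eraseP M) (erasePBs Bs)
  | .plam M => eraseP M
  | .papp M _ => eraseP M
def erasePBs : List (Label × PTm) → List (Label × UTm)
  | [] => []
  | (ℓ, M) :: Bs => (ℓ, eraseP M) :: erasePBs Bs
end

/-!
A target term erasing to an injection `(ℓ u)` has `ℓ` present in its type. A target term erasing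
to a variable `y` has a type obtained from that of `y` by instantiating presence variables and by
conversion, and neither makes a label possible (not absent) that was not possible before. So take
`ℓ` not possible in `⟦⟨0 : α₀⟩⟧` and `R₂ = ⟨0 : α₀; ℓ : α₀⟩`: the translation of `(ℓ y)^R₂` makes
`ℓ` present in `⟦R₂⟧`, while that of `y^⟨0 : α₀⟩ ▷ R₂` erases to `y`, so `ℓ` is not possible in
`⟦R₂⟧`.
-/

lemma VSub.append_right (R R' : List (Label × Ty)) : VSub R (R ++ R') := by
  intro ℓ A h
  rw [List.lookup_append, h, Option.some_or]

def rowLabels (p : Pre → Prop) : PTy → Set Label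
  | .tvar _ => ∅
  | .arrow _ _ => ∅
  | .variant es => {ℓ | ∃ P, p P ∧ (ℓ, P) ∈ es.map fun q => (q.1, q.2.1)}
  | .pall A => rowLabels p A

def presentLabels : PTy → Set Label := rowLabels (· = Pre.pres)

def possibleLabels : PTy → Set Label := rowLabels (· ≠ Pre.abs)

lemma rowLabels_mono {p q : Pre → Prop} (h : ∀ P, p P → q P) (A : PTy) :
    rowLabels p A ⊆ rowLabels q A := by
  induction A using rowLabels.induct with
  | case1 | case2 => exact subset_rfl
  | case3 es => rintro ℓ ⟨P, hP, hmem⟩; exact ⟨P, h P hP, hmem⟩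
  | case4 A ih => exact ih

lemma presentLabels_subset_possibleLabels (A : PTy) : presentLabels A ⊆ possibleLabels A :=
  rowLabels_mono (by rintro _ rfl; exact Pre.noConfusion) A

lemma rowLabels_finite (p : Pre → Prop) (A : PTy) : (rowLabels p A).Finite := by
  induction A using rowLabels.induct with
  | case1 | case2 => exact Set.finite_empty
  | case3 es =>
    refine (List.finite_toSet (es.map Prod.fst)).subset ?_
    rintro ℓ ⟨P, -, hmem⟩
    obtain ⟨q, hq, hqℓ⟩ := List.mem_map.mp hmem
    exact List.mem_map.mpr ⟨q, hq, congrArg Prod.fst hqℓ⟩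
  | case4 A ih => exact ih

lemma PTyEquiv.rowLabels_eq {p : Pre → Prop} (habs : ¬ p .abs) {A B : PTy}
    (h : PTyEquiv A B) : rowLabels p A = rowLabels p B := by
  induction h with
  | refl => rfl
  | symm _ ih => exact ih.symm
  | trans _ _ ih₁ ih₂ => exact ih₁.trans ih₂
  | arrow => rfl
  | pall _ ih => exact ih
  | variantCongr hmap => simp only [rowLabels, hmap]
  | variantPerm hperm => simp only [rowLabels, (hperm.map _).mem_iff]
  | variantAbsent =>
    ext ℓ
    simp only [rowLabels, List.map_append, List.map_cons, List.mem_append, List.mem_cons,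
      Set.mem_ofPred_eq, Prod.mk.injEq]
    constructor
    · rintro ⟨P, hP, h | ⟨-, rfl⟩ | h⟩
      exacts [⟨P, hP, .inl h⟩, absurd hP habs, ⟨P, hP, .inr h⟩]
    · rintro ⟨P, hP, h | h⟩
      exacts [⟨P, hP, .inl h⟩, ⟨P, hP, .inr (.inr h)⟩]

lemma substPEs_eq_map (k : ℕ) (P : Pre) (es : List (Label × Pre × PTy)) :
    substPEs k P es = es.map fun q => (q.1, substPre k P q.2.1, substPTy k P q.2.2) := by
  induction es with
  | nil => rfl
  | cons q es ih => simp only [substPEs, ih, List.map_cons]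

lemma shiftPEs_eq_map (c : ℕ) (es : List (Label × Pre × PTy)) :
    shiftPEs c es = es.map fun q => (q.1, shiftPre c q.2.1, shiftPTy c q.2.2) := by
  induction es with
  | nil => rfl
  | cons q es ih => simp only [shiftPEs, ih, List.map_cons]

lemma rowLabels_subset_substPTy {p : Pre → Prop} (hp : ∀ k P Q, p Q → p (substPre k P Q))
    (A : PTy) (k : ℕ) (P : Pre) : rowLabels p A ⊆ rowLabels p (substPTy k P A) := by
  induction A using rowLabels.induct generalizing k P with
  | case1 | case2 => exact Set.empty_subset _
  | case3 es =>
    rintro ℓ ⟨Q, hQ, hmem⟩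
    obtain ⟨q, hq, hqℓ⟩ := List.mem_map.mp hmem
    obtain ⟨rfl, rfl⟩ := Prod.mk.inj hqℓ
    refine ⟨_, hp k P _ hQ, ?_⟩
    simp only [substPEs_eq_map, List.map_map]
    exact List.mem_map.mpr ⟨q, hq, rfl⟩
  | case4 A ih => exact ih (k + 1) (shiftPre 0 P)

lemma rowLabels_substPTy_subset {p : Pre → Prop} (hp : ∀ k P Q, p (substPre k P Q) → p Q)
    (A : PTy) (k : ℕ) (P : Pre) : rowLabels p (substPTy k P A) ⊆ rowLabels p A := by
  induction A using rowLabels.induct generalizing k P with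
  | case1 | case2 => exact Set.empty_subset _
  | case3 es =>
    rintro ℓ ⟨Q, hQ, hmem⟩
    simp only [substPEs_eq_map, List.map_map, List.mem_map] at hmem
    obtain ⟨q, hq, hqℓ⟩ := hmem
    simp only [Function.comp_apply, Prod.mk.injEq] at hqℓ
    obtain ⟨rfl, rfl⟩ := hqℓ
    exact ⟨q.2.1, hp k P _ hQ, List.mem_map.mpr ⟨q, hq, rfl⟩⟩
  | case4 A ih => exact ih (k + 1) (shiftPre 0 P)

lemma rowLabels_shiftPTy_subset {p : Pre → Prop} (hp : ∀ c Q, p (shiftPre c Q) → p Q)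
    (A : PTy) (c : ℕ) : rowLabels p (shiftPTy c A) ⊆ rowLabels p A := by
  induction A using rowLabels.induct generalizing c with
  | case1 | case2 => exact Set.empty_subset _
  | case3 es =>
    rintro ℓ ⟨Q, hQ, hmem⟩
    simp only [shiftPEs_eq_map, List.map_map, List.mem_map] at hmem
    obtain ⟨q, hq, hqℓ⟩ := hmem
    simp only [Function.comp_apply, Prod.mk.injEq] at hqℓ
    obtain ⟨rfl, rfl⟩ := hqℓ
    exact ⟨q.2.1, hp c _ hQ, List.mem_map.mpr ⟨q, hq, rfl⟩⟩
  | case4 A ih => exact ih (c + 1)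

lemma mem_presentLabels_of_eraseP_eq_inj {Γ : List PTy} {N : PTm} {S : PTy}
    (h : PHasTy Γ N S) {ℓ : Label} {u : UTm} (he : eraseP N = .inj ℓ u) :
    ℓ ∈ presentLabels S := by
  induction h with
  | var | lam | app | case => simp [eraseP] at he
  | inj hlk =>
    obtain ⟨rfl, -⟩ := UTm.inj.inj he
    obtain ⟨l₁, l₂, rfl, -⟩ := List.lookup_eq_some_iff.mp hlk
    exact ⟨_, rfl, List.mem_map.mpr ⟨_, List.mem_append_right _ List.mem_cons_self, rfl⟩⟩
  | plam _ ih => exact ih he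
  | papp _ ih => exact rowLabels_subset_substPTy (by rintro _ _ _ rfl; rfl) _ 0 _ (ih he)
  | conv _ heq ih => exact (heq.rowLabels_eq (p := (· = Pre.pres)) Pre.noConfusion).subset (ih he)

lemma possibleLabels_subset_of_eraseP_eq_var {Γ : List PTy} {N : PTm} {S : PTy}
    (h : PHasTy Γ N S) {n : ℕ} (he : eraseP N = .var n) :
    ∃ T, Γ[n]? = some T ∧ possibleLabels S ⊆ possibleLabels T := by
  induction h with
  | var hΓ => exact ⟨_, UTm.var.inj he ▸ hΓ, subset_rfl⟩
  | lam | app | inj | case => simp [eraseP] at he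
  | plam _ ih =>
    obtain ⟨T, hT, hsub⟩ := ih he
    rw [List.getElem?_map, Option.map_eq_some_iff] at hT
    obtain ⟨T₀, hT₀, rfl⟩ := hT
    refine ⟨T₀, hT₀, hsub.trans ?_⟩
    exact rowLabels_shiftPTy_subset (by rintro _ _ h rfl; exact h rfl) T₀ 0
  | papp _ ih =>
    obtain ⟨T, hT, hsub⟩ := ih he
    refine ⟨T, hT, Set.Subset.trans ?_ hsub⟩
    exact rowLabels_substPTy_subset (by rintro _ _ _ h rfl; exact h rfl) _ 0 _
  | conv _ heq ih =>
    obtain ⟨T, hT, hsub⟩ := ih he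
    exact ⟨T, hT, (heq.rowLabels_eq (p := (· ≠ Pre.abs)) (· rfl)).symm.subset.trans hsub⟩

theorem no_type_only_encoding :
    ¬ ∃ (trTy : Ty → PTy)
        (trD : ∀ (Γ : List Ty) (M : Tm) (A : Ty), Deriv Γ M A → PTm),
      (∀ Γ M A (d : Deriv Γ M A), PHasTy (Γ.map trTy) (trD Γ M A d) (trTy A)) ∧
      (∀ Γ M A (d : Deriv Γ M A), eraseP (trD Γ M A d) = eraseS M) := by
  rintro ⟨trTy, trD, htyped, herase⟩
  let R₁ : List (Label × Ty) := [(0, .tvar 0)]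
  obtain ⟨ℓ, hℓ⟩ := (rowLabels_finite (· ≠ Pre.abs) (trTy (.variant R₁))).exists_notMem
  let R₂ := R₁ ++ [(ℓ, .tvar 0)]
  have hlookup : R₂.lookup ℓ = some (.tvar 0) := by
    simp only [R₂, R₁, List.cons_append, List.nil_append, List.lookup_cons]
    split <;> simp
  let dInj : Deriv [.tvar 0] (.inj ℓ (.var 0) (.variant R₂)) (.variant R₂) :=
    .inj hlookup (.var rfl)
  let dUpcast :
      Deriv [.variant R₁] (.upcast (.var 0) (.variant R₁) (.variant R₂)) (.variant R₂) :=
    .upcast (.var rfl) (VSub.append_right R₁ _)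
  have hpresent : ℓ ∈ presentLabels (trTy (.variant R₂)) :=
    mem_presentLabels_of_eraseP_eq_inj (htyped _ _ _ dInj) (by rw [herase]; rfl)
  obtain ⟨T, hT, hsub⟩ :=
    possibleLabels_subset_of_eraseP_eq_var (htyped _ _ _ dUpcast) (by rw [herase]; rfl)
  obtain rfl : trTy (.variant R₁) = T := by simpa using hT
  exact hℓ (hsub (presentLabels_subset_possibleLabels _ hpresent))

end Stmt11
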